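/- Interpolated Fourier slice identities: Let f ∈ O_n and let α, β be real numbers with |α| < 1 and |β| < 1. Then for all real (η,ζ), f̂_{(1,α,β)}(η,ζ) = Σ_{(j,k) ∈ Z_p²} f̂(-α·j-β·k, j, k)·D_p(η-j)·D_p(ζ-k), and for all real (ξ,η), f̂_{(α,β,1)}(ξ,η) = Σ_{(j,k) ∈ Z_p²} f̂(j, k, -α·j-β·k)·D_p(ξ-j)·D_p(η-k). -/

import Mathlib

open Complex MeasureTheory ProbabilityTheory BigOperators

noncomputable section

namespace Tomo3D

/-- `Z_m`: the integers in `[-(m-1)/2, (m-1)/2]` (for odd `m`). -/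
def Zf (m : ℕ) : Finset ℤ :=
  Finset.Icc (-(((m : ℤ) - 1) / 2)) (((m : ℤ) - 1) / 2)

/-- `Z_m²`. -/
def Zf2 (m : ℕ) : Finset (ℤ × ℤ) := Zf m ×ˢ Zf m

/-- The `p`-periodic Dirichlet kernel `D_p`. -/
def Dk (p : ℕ) (t : ℝ) : ℂ :=
  (p : ℂ)⁻¹ * ∑ l ∈ Zf p,
    Complex.exp (2 * (Real.pi : ℂ) * Complex.I * (l : ℂ) * (t : ℂ) / (p : ℂ))

/-- The class `O_n`: objects supported in `Z_n³`. -/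
def IsObj (n : ℕ) (f : ℤ → ℤ → ℤ → ℂ) : Prop :=
  ∀ i j k : ℤ, i ∉ Zf n ∨ j ∉ Zf n ∨ k ∉ Zf n → f i j k = 0

/-- Continuous interpolation `f̃` of an object. -/
def interp (n : ℕ) (f : ℤ → ℤ → ℤ → ℂ) (x y z : ℝ) : ℂ :=
  ∑ i ∈ Zf n, ∑ j ∈ Zf n, ∑ k ∈ Zf n,
    f i j k * Dk (2 * n - 1) (x - (i : ℝ)) * Dk (2 * n - 1) (y - (j : ℝ)) *
      Dk (2 * n - 1) (z - (k : ℝ))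

/-- Directions `(1,α,β)`, `(α,1,β)`, `(α,β,1)`. -/
inductive Dir
  | dx (α β : ℝ)
  | dy (α β : ℝ)
  | dz (α β : ℝ)

/-- Validity of a direction: the slopes satisfy `|α| < 1`, `|β| < 1`. -/
def Dir.valid : Dir → Prop
  | .dx α β => |α| < 1 ∧ |β| < 1
  | .dy α β => |α| < 1 ∧ |β| < 1
  | .dz α β => |α| < 1 ∧ |β| < 1

/-- The vector in `ℝ³` attached to a direction. -/
def Dir.toVec : Dir → ℝ × ℝ × ℝ
  | .dx α β => (1, α, β)
  | .dy α β => (α, 1, β)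
  | .dz α β => (α, β, 1)

/-- Two directions are parallel if one is a real scalar multiple of the other. -/
def Dir.Parallel (t t' : Dir) : Prop :=
  ∃ c : ℝ, t'.toVec = c • t.toVec ∨ t.toVec = c • t'.toVec

/-- Discrete projection of an object along a direction, regarded as a function on
`Z_{2n-1}²` extended by zero to `ℤ²`. -/
def proj (n : ℕ) (f : ℤ → ℤ → ℤ → ℂ) : Dir → ℤ × ℤ → ℂ
  | .dx α β => fun c =>
      if c ∈ Zf2 (2 * n - 1) then
        ∑ i ∈ Zf n, interp n f (i : ℝ) (α * (i : ℝ) + (c.1 : ℝ)) (β * (i : ℝ) + (c.2 : ℝ))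
      else 0
  | .dy α β => fun c =>
      if c ∈ Zf2 (2 * n - 1) then
        ∑ j ∈ Zf n, interp n f (α * (j : ℝ) + (c.1 : ℝ)) (j : ℝ) (β * (j : ℝ) + (c.2 : ℝ))
      else 0
  | .dz α β => fun c =>
      if c ∈ Zf2 (2 * n - 1) then
        ∑ k ∈ Zf n, interp n f (α * (k : ℝ) + (c.1 : ℝ)) (β * (k : ℝ) + (c.2 : ℝ)) (k : ℝ)
      else 0

/-- 3D discrete Fourier transform of an object (defined for all real frequencies). -/
def ft3 (n : ℕ) (f : ℤ → ℤ → ℤ → ℂ) (ξ η ζ : ℝ) : ℂ :=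
  ∑ i ∈ Zf n, ∑ j ∈ Zf n, ∑ k ∈ Zf n,
    f i j k *
      Complex.exp (-(2 * (Real.pi : ℂ) * Complex.I) *
        ((ξ : ℂ) * (i : ℂ) + (η : ℂ) * (j : ℂ) + (ζ : ℂ) * (k : ℂ)) /
          (((2 * n - 1 : ℕ) : ℂ)))

/-- 2D discrete Fourier transform of a projection (defined for all real frequencies). -/
def ft2 (n : ℕ) (g : ℤ × ℤ → ℂ) (η ζ : ℝ) : ℂ :=
  ∑ c ∈ Zf2 (2 * n - 1),
    g c *
      Complex.exp (-(2 * (Real.pi : ℂ) * Complex.I) *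
        ((η : ℂ) * (c.1 : ℂ) + (ζ : ℂ) * (c.2 : ℂ)) / (((2 * n - 1 : ℕ) : ℂ)))

/-- Diffraction pattern of `h : Z_p² → ℂ`. -/
def dpat (p : ℕ) (h : ℤ × ℤ → ℂ) (w : ℝ × ℝ) : ℝ :=
  ‖∑ m ∈ Zf2 p,
      h m * Complex.exp (-(2 * (Real.pi : ℂ) * Complex.I) *
        ((m.1 : ℂ) * (w.1 : ℂ) + (m.2 : ℂ) * (w.2 : ℂ)))‖ ^ 2

/-- `h₁` and `h₂` produce the same diffraction pattern (on `[-1/2,1/2]²`). -/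
def SameDP (p : ℕ) (h₁ h₂ : ℤ × ℤ → ℂ) : Prop :=
  ∀ w : ℝ × ℝ, w.1 ∈ Set.Icc (-(1 : ℝ) / 2) (1 / 2) →
    w.2 ∈ Set.Icc (-(1 : ℝ) / 2) (1 / 2) → dpat p h₁ w = dpat p h₂ w

/-- Autocorrelation of `h : ℤ² → ℂ`. -/
def autocorr (h : ℤ × ℤ → ℂ) (m : ℤ × ℤ) : ℂ :=
  ∑' m' : ℤ × ℤ, h (m' + m) * (starRingEnd ℂ) (h m')

/-- The random phase mask `μ(m) = exp(i φ(m))`. -/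
def mask {Ω : Type*} (φ : ℤ × ℤ → Ω → ℝ) (ω : Ω) (m : ℤ × ℤ) : ℂ :=
  Complex.exp (Complex.I * ((φ m ω : ℝ) : ℂ))

/-- The Mask Assumption: the phases `φ(m)`, `m ∈ Z_p²`, are independent real random
variables whose laws have no atoms. -/
def MaskAssumption {Ω : Type*} [MeasurableSpace Ω] (P : Measure Ω) (p : ℕ)
    (φ : ℤ × ℤ → Ω → ℝ) : Prop :=
  (∀ m, Measurable (φ m)) ∧
  iIndepFun (m := fun _ : {m : ℤ × ℤ // m ∈ Zf2 p} => (inferInstance : MeasurableSpace ℝ))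
    (fun m : {m : ℤ × ℤ // m ∈ Zf2 p} => φ m.1) P ∧
  ∀ m ∈ Zf2 p, ∀ r : ℝ, P {ω | φ m ω = r} = 0

/-- The uniform random phase mask: independent phases, uniformly distributed on `[0,2π)`. -/
def UniformMask {Ω : Type*} [MeasurableSpace Ω] (P : Measure Ω) (p : ℕ)
    (φ : ℤ × ℤ → Ω → ℝ) : Prop :=
  (∀ m, Measurable (φ m)) ∧
  iIndepFun (m := fun _ : {m : ℤ × ℤ // m ∈ Zf2 p} => (inferInstance : MeasurableSpace ℝ))
    (fun m : {m : ℤ × ℤ // m ∈ Zf2 p} => φ m.1) P ∧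
  ∀ m ∈ Zf2 p,
    P.map (φ m) = (ENNReal.ofReal (2 * Real.pi))⁻¹ • volume.restrict (Set.Ico 0 (2 * Real.pi))

/-- The representative of `x` modulo `p` lying in `Z_p` (for odd `p`). -/
def zmodRep (p : ℕ) (x : ℤ) : ℤ := (x + ((p : ℤ) - 1) / 2) % (p : ℤ) - ((p : ℤ) - 1) / 2

/-- `p`-periodic extension to `ℤ²` of a function on `Z_p²`. -/
def perExt (p : ℕ) (h : ℤ × ℤ → ℂ) (m : ℤ × ℤ) : ℂ := h (zmodRep p m.1, zmodRep p m.2)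

/-- A function on `ℤ²` is supported on a line. -/
def SuppOnLine (h : ℤ × ℤ → ℂ) : Prop :=
  ∃ a b : ℝ × ℝ, ∀ m : ℤ × ℤ, h m ≠ 0 →
    ∃ s : ℝ, ((m.1 : ℝ), (m.2 : ℝ)) = (a.1 + s * b.1, a.2 + s * b.2)

/-- The diversity condition for a family of slope pairs. -/
def Diversity (n : ℕ) (α β : Fin n → ℝ) : Prop :=
  (∀ l, |α l| < 1 ∧ |β l| < 1) ∧
  ∀ ξη : ℤ × ℤ, ξη ∈ Zf2 (2 * n - 1) → ξη ≠ (0, 0) →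
    ∀ l l' : Fin n, l ≠ l' →
      ¬ ∃ z : ℤ,
        α l * (ξη.1 : ℝ) + β l * (ξη.2 : ℝ) - (α l' * (ξη.1 : ℝ) + β l' * (ξη.2 : ℝ))
          = (z : ℝ) * (((2 * n - 1 : ℕ) : ℝ))

/-- The 3D Itoh condition for `κ`: variation less than `π/κ` between adjacent grid points. -/
def Itoh (n : ℕ) (κ : ℝ) (f : ℤ → ℤ → ℤ → ℂ) : Prop :=
  ∀ i j k i' j' k' : ℤ,
    i ∈ Zf n → j ∈ Zf n → k ∈ Zf n → i' ∈ Zf n → j' ∈ Zf n → k' ∈ Zf n →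
    ((|i - i'| = 1 ∧ j = j' ∧ k = k') ∨ (i = i' ∧ |j - j'| = 1 ∧ k = k') ∨
      (i = i' ∧ j = j' ∧ |k - k'| = 1)) →
    ‖f i j k - f i' j' k'‖ < Real.pi / κ

/-- The common set `L_{t,t'}(f)` for directions `t = (α,β,1)` and `t' = (α',β',1)`. -/
def commonSet (n : ℕ) (f : ℤ → ℤ → ℤ → ℂ) (α β α' β' : ℝ) : Set ((ℝ × ℝ) × (ℝ × ℝ)) :=
  {kk | ft2 n (proj n f (Dir.dz α β)) kk.1.1 kk.1.2
      = ft2 n (proj n f (Dir.dz α' β')) kk.2.1 kk.2.2}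

/-- `k` has a slope (its first component is nonzero) which is not a fraction over `Z_p`. -/
def BadSlope (p : ℕ) (k : ℝ × ℝ) : Prop :=
  k.1 ≠ 0 ∧ ∀ a b : ℤ, a ∈ Zf p → b ∈ Zf p → b ≠ 0 → k.2 / k.1 ≠ (a : ℝ) / (b : ℝ)

/-- Sector condition: every nonzero value of `h` has phase angle in `[a, b]` (mod 2π). -/
def Sector (a b : ℝ) (h : ℤ × ℤ → ℂ) : Prop :=
  ∀ m : ℤ × ℤ, h m ≠ 0 →
    ∃ θ ∈ Set.Icc a b, h m = ((‖h m‖ : ℝ) : ℂ) * Complex.exp (Complex.I * (θ : ℂ))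

open scoped Classical in
/-- Number of points of `Z_p²` where `h` does not vanish. -/
def nnz (p : ℕ) (h : ℤ × ℤ → ℂ) : ℕ := ((Zf2 p).filter fun m => h m ≠ 0).card

/-! The interpolated projection along `(1, α, β)` only samples `f̃` at the grid points `x = i`,
where the Dirichlet kernel is a Kronecker delta, so it is a sum of translated products of two
Dirichlet kernels. The 2D transform then factors into two one-dimensional transforms of
translated kernels, and the transform of `c ↦ D_p(x + c)` at `η` is the trigonometric
interpolation `∑ₗ e(l x / p) D_p(η - l)`; collecting the phases `e(l (α i - j) / p)` gives the
3D transform on the slice. The direction `(α, β, 1)` is the direction `(1, α, β)` for the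
cyclically relabelled object `(i, j, k) ↦ f (j, k, i)`. -/

open Real

def expDiv (p : ℕ) (x : ℝ) : ℂ := cexp (2 * π * I * x / p)

lemma expDiv_add (p : ℕ) (x y : ℝ) : expDiv p (x + y) = expDiv p x * expDiv p y := by
  simp only [expDiv, ← Complex.exp_add]
  congr 1
  push_cast
  ring

lemma Dk_eq_sum_expDiv (p : ℕ) (t : ℝ) :
    Dk p t = (p : ℂ)⁻¹ * ∑ l ∈ Zf p, expDiv p (l * t) := by
  rw [Dk]
  refine congrArg _ (Finset.sum_congr rfl fun l _ => congrArg cexp ?_)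
  push_cast
  ring

lemma ft2_eq_sum_expDiv (n : ℕ) (g : ℤ × ℤ → ℂ) (η ζ : ℝ) :
    ft2 n g η ζ = ∑ c ∈ Zf2 (2 * n - 1), g c * expDiv (2 * n - 1) (-(η * c.1 + ζ * c.2)) := by
  rw [ft2]
  refine Finset.sum_congr rfl fun c _ => congrArg _ (congrArg cexp ?_)
  push_cast
  ring

lemma ft3_eq_sum_expDiv (n : ℕ) (f : ℤ → ℤ → ℤ → ℂ) (ξ η ζ : ℝ) :
    ft3 n f ξ η ζ = ∑ i ∈ Zf n, ∑ j ∈ Zf n, ∑ k ∈ Zf n,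
      f i j k * expDiv (2 * n - 1) (-(ξ * i + η * j + ζ * k)) := by
  rw [ft3]
  refine Finset.sum_congr rfl fun i _ => Finset.sum_congr rfl fun j _ =>
    Finset.sum_congr rfl fun k _ => congrArg _ (congrArg cexp ?_)
  push_cast
  ring

lemma mem_Zf {m : ℕ} {x : ℤ} : x ∈ Zf m ↔ -(((m : ℤ) - 1) / 2) ≤ x ∧ x ≤ ((m : ℤ) - 1) / 2 :=
  Finset.mem_Icc

lemma card_Zf {p : ℕ} (hp : Odd p) : (Zf p).card = p := by
  obtain ⟨q, rfl⟩ := hp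
  rw [Zf, Int.card_Icc]
  omega

lemma neg_mem_Zf {m : ℕ} {x : ℤ} (hx : x ∈ Zf m) : -x ∈ Zf m := by
  rw [mem_Zf] at hx ⊢
  omega

lemma sum_Icc_zpow_eq_zero {K : Type*} [Field K] {ω : K} (hω0 : ω ≠ 0) (hω1 : ω ≠ 1)
    {a b : ℤ} (hab : a ≤ b + 1) (hper : ω ^ (b + 1 - a) = 1) :
    ∑ l ∈ Finset.Icc a b, ω ^ l = 0 := by
  set S := ∑ l ∈ Finset.Icc a b, ω ^ l
  have hshift : ω * S = ∑ l ∈ Finset.Icc (a + 1) (b + 1), ω ^ l := by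
    rw [Finset.mul_sum, ← Finset.map_add_right_Icc, Finset.sum_map]
    exact Finset.sum_congr rfl fun l _ => by simp [zpow_add_one₀ hω0, mul_comm]
  have hwrap : ω ^ (b + 1) = ω ^ a := by
    rw [show b + 1 = a + (b + 1 - a) by ring, zpow_add₀ hω0, hper, mul_one]
  have hright := Finset.sum_insert (f := (ω ^ ·)) (show b + 1 ∉ Finset.Icc a b by simp)
  have hleft := Finset.sum_insert (f := (ω ^ ·)) (show a ∉ Finset.Icc (a + 1) (b + 1) by simp)
  rw [Finset.insert_Icc_right_eq_Icc_add_one hab] at hright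
  rw [Finset.insert_Icc_add_one_left_eq_Icc (by omega)] at hleft
  have : (1 - ω) * S = 0 := by linear_combination hleft - hright - hshift - hwrap
  exact (mul_eq_zero.mp this).resolve_left (sub_ne_zero.mpr hω1.symm)

lemma sum_Zf_expDiv_intCast_mul {p : ℕ} (hp : Odd p) (m : ℤ) :
    ∑ l ∈ Zf p, expDiv p (l * m) = if (p : ℤ) ∣ m then (p : ℂ) else 0 := by
  obtain ⟨ζ, hζdef⟩ : ∃ ζ, ζ = cexp (2 * π * I / p) := ⟨_, rfl⟩
  have hζ : IsPrimitiveRoot ζ p := hζdef ▸ Complex.isPrimitiveRoot_exp p hp.pos.ne'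
  have hterm : ∀ l : ℤ, expDiv p (l * m) = (ζ ^ m) ^ l := fun l => by
    rw [← zpow_mul, hζdef, ← Complex.exp_int_mul, expDiv]
    congr 1
    push_cast
    ring
  simp only [hterm]
  split_ifs with hdvd
  · simp [(hζ.zpow_eq_one_iff_dvd m).mpr hdvd, card_Zf hp]
  · obtain ⟨q, hq⟩ := hp
    refine sum_Icc_zpow_eq_zero (zpow_ne_zero _ (hζ.ne_zero (by omega)))
      ((hζ.zpow_eq_one_iff_dvd m).not.mpr hdvd) (by omega) ?_
    rw [show ((p : ℤ) - 1) / 2 + 1 - -(((p : ℤ) - 1) / 2) = p by omega, ← zpow_mul, mul_comm,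
      zpow_mul, zpow_natCast, hζ.pow_eq_one, one_zpow]

lemma Dk_intCast {p : ℕ} (hp : Odd p) (m : ℤ) : Dk p m = if (p : ℤ) ∣ m then 1 else 0 := by
  rw [Dk_eq_sum_expDiv, sum_Zf_expDiv_intCast_mul hp]
  split_ifs
  · exact inv_mul_cancel₀ (Nat.cast_ne_zero.mpr hp.pos.ne')
  · exact mul_zero _

lemma Dk_sub_of_mem_Zf {n : ℕ} {i i' : ℤ} (hi : i ∈ Zf n) (hi' : i' ∈ Zf n) :
    Dk (2 * n - 1) (i - i') = if i = i' then 1 else 0 := by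
  rw [mem_Zf] at hi hi'
  have hp : ((2 * n - 1 : ℕ) : ℤ) = 2 * n - 1 := by omega
  rw [← Int.cast_sub, Dk_intCast ⟨n - 1, by omega⟩, hp]
  refine if_congr ⟨fun hdvd => ?_, fun h => by simp [h]⟩ rfl rfl
  have := Int.eq_zero_of_abs_lt_dvd hdvd (abs_lt.mpr ⟨by omega, by omega⟩)
  omega

lemma Dk_neg (p : ℕ) (t : ℝ) : Dk p (-t) = Dk p t := by
  rw [Dk_eq_sum_expDiv, Dk_eq_sum_expDiv]
  congr 1
  refine Finset.sum_nbij' (- ·) (- ·) (fun _ => neg_mem_Zf) (fun _ => neg_mem_Zf)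
    (fun _ _ => neg_neg _) (fun _ _ => neg_neg _) fun l _ => ?_
  push_cast
  ring_nf

lemma interp_intCast_of_mem_Zf {n : ℕ} (f : ℤ → ℤ → ℤ → ℂ) {i : ℤ} (hi : i ∈ Zf n) (y z : ℝ) :
    interp n f i y z = ∑ j ∈ Zf n, ∑ k ∈ Zf n,
      f i j k * Dk (2 * n - 1) (y - j) * Dk (2 * n - 1) (z - k) := by
  rw [interp, Finset.sum_eq_single_of_mem i hi fun i' hi' hne => ?_]
  · have h0 : Dk (2 * n - 1) 0 = 1 := by simpa using Dk_sub_of_mem_Zf hi hi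
    simp [h0]
  · simp [Dk_sub_of_mem_Zf hi hi', hne.symm]

lemma interp_rotate (n : ℕ) (f : ℤ → ℤ → ℤ → ℂ) (x y z : ℝ) :
    interp n (fun i j k => f j k i) z x y = interp n f x y z := by
  rw [interp, interp, Finset.sum_comm]
  refine Finset.sum_congr rfl fun i _ => ?_
  rw [Finset.sum_comm]
  exact Finset.sum_congr rfl fun j _ => Finset.sum_congr rfl fun k _ => by ring

lemma ft3_rotate (n : ℕ) (f : ℤ → ℤ → ℤ → ℂ) (ξ η ζ : ℝ) :
    ft3 n (fun i j k => f j k i) ζ ξ η = ft3 n f ξ η ζ := by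
  rw [ft3_eq_sum_expDiv, ft3_eq_sum_expDiv, Finset.sum_comm]
  refine Finset.sum_congr rfl fun i _ => ?_
  rw [Finset.sum_comm]
  exact Finset.sum_congr rfl fun j _ => Finset.sum_congr rfl fun k _ => by ring_nf

lemma proj_dz_eq_proj_dx_rotate (n : ℕ) (f : ℤ → ℤ → ℤ → ℂ) (α β : ℝ) :
    proj n f (.dz α β) = proj n (fun i j k => f j k i) (.dx α β) := by
  ext c
  simp only [proj, interp_rotate]

lemma sum_Zf_Dk_add_mul_expDiv (p : ℕ) (x η : ℝ) :
    ∑ c ∈ Zf p, Dk p (x + c) * expDiv p (-(η * c)) =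
      ∑ l ∈ Zf p, expDiv p (l * x) * Dk p (η - l) := by
  simp only [← Dk_neg p (η - _), neg_sub, Dk_eq_sum_expDiv, Finset.mul_sum, Finset.sum_mul]
  rw [Finset.sum_comm]
  refine Finset.sum_congr rfl fun l _ => Finset.sum_congr rfl fun c _ => ?_
  have hphase : expDiv p (l * (x + c)) * expDiv p (-(η * c)) =
      expDiv p (l * x) * expDiv p (c * (l - η)) := by
    rw [← expDiv_add, ← expDiv_add]
    ring_nf
  linear_combination (p : ℂ)⁻¹ * hphase

lemma sum_Zf2_Dk_mul_Dk_mul_expDiv (p : ℕ) (x y η ζ : ℝ) :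
    ∑ c ∈ Zf2 p, Dk p (x + c.1) * Dk p (y + c.2) * expDiv p (-(η * c.1 + ζ * c.2)) =
      ∑ c ∈ Zf2 p, expDiv p (c.1 * x + c.2 * y) * Dk p (η - c.1) * Dk p (ζ - c.2) := by
  calc _ = ∑ c ∈ Zf2 p, (Dk p (x + c.1) * expDiv p (-(η * c.1))) *
        (Dk p (y + c.2) * expDiv p (-(ζ * c.2))) :=
        Finset.sum_congr rfl fun c _ => by rw [neg_add, expDiv_add]; ring
    _ = ∑ c ∈ Zf2 p, (expDiv p (c.1 * x) * Dk p (η - c.1)) *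
        (expDiv p (c.2 * y) * Dk p (ζ - c.2)) := by
        simp only [Zf2, Finset.sum_product, ← Finset.sum_mul_sum, sum_Zf_Dk_add_mul_expDiv]
    _ = _ := Finset.sum_congr rfl fun c _ => by rw [expDiv_add]; ring

lemma sum_comm_sum_sum_sum {α β γ δ M : Type*} [AddCommMonoid M] (s : Finset α) (t : Finset β)
    (u : Finset γ) (v : Finset δ) (F : α → β → γ → δ → M) :
    ∑ a ∈ s, ∑ b ∈ t, ∑ c ∈ u, ∑ d ∈ v, F a b c d =
      ∑ b ∈ t, ∑ c ∈ u, ∑ d ∈ v, ∑ a ∈ s, F a b c d := by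
  rw [Finset.sum_comm]
  refine Finset.sum_congr rfl fun b _ => ?_
  rw [Finset.sum_comm]
  exact Finset.sum_congr rfl fun c _ => Finset.sum_comm

lemma proj_dx_of_mem {n : ℕ} (f : ℤ → ℤ → ℤ → ℂ) (α β : ℝ) {c : ℤ × ℤ}
    (hc : c ∈ Zf2 (2 * n - 1)) :
    proj n f (.dx α β) c = ∑ i ∈ Zf n, ∑ j ∈ Zf n, ∑ k ∈ Zf n,
      f i j k * Dk (2 * n - 1) ((α * i - j) + c.1) * Dk (2 * n - 1) ((β * i - k) + c.2) := by
  simp only [proj, if_pos hc]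
  refine Finset.sum_congr rfl fun i hi => ?_
  rw [interp_intCast_of_mem_Zf f hi]
  ring_nf

lemma ft2_proj_dx (n : ℕ) (f : ℤ → ℤ → ℤ → ℂ) (α β η ζ : ℝ) :
    ft2 n (proj n f (.dx α β)) η ζ = ∑ c ∈ Zf2 (2 * n - 1),
      ft3 n f (-α * c.1 - β * c.2) c.1 c.2 * Dk (2 * n - 1) (η - c.1) * Dk (2 * n - 1) (ζ - c.2) := by
  calc _ = ∑ c ∈ Zf2 (2 * n - 1), ∑ i ∈ Zf n, ∑ j ∈ Zf n, ∑ k ∈ Zf n, f i j k *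
        (Dk (2 * n - 1) ((α * i - j) + c.1) * Dk (2 * n - 1) ((β * i - k) + c.2) * expDiv (2 * n - 1) (-(η * c.1 + ζ * c.2))) := by
        rw [ft2_eq_sum_expDiv]
        refine Finset.sum_congr rfl fun c hc => ?_
        simp only [proj_dx_of_mem f α β hc, Finset.sum_mul, mul_assoc]
    _ = ∑ i ∈ Zf n, ∑ j ∈ Zf n, ∑ k ∈ Zf n, f i j k * ∑ c ∈ Zf2 (2 * n - 1),
        expDiv (2 * n - 1) (c.1 * (α * i - j) + c.2 * (β * i - k)) * Dk (2 * n - 1) (η - c.1) * Dk (2 * n - 1) (ζ - c.2) := by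
        simp only [sum_comm_sum_sum_sum (Zf2 (2 * n - 1)), ← Finset.mul_sum, sum_Zf2_Dk_mul_Dk_mul_expDiv]
    _ = _ := by
        simp only [ft3_eq_sum_expDiv, Finset.sum_mul, Finset.mul_sum, sum_comm_sum_sum_sum (Zf2 (2 * n - 1))]
        refine Finset.sum_congr rfl fun i _ => Finset.sum_congr rfl fun j _ =>
          Finset.sum_congr rfl fun k _ => Finset.sum_congr rfl fun c _ => ?_
        ring_nf

theorem interpolated_fourier_slice_general
    (n : ℕ) (f : ℤ → ℤ → ℤ → ℂ) (α β : ℝ) :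
    (∀ η ζ : ℝ, ft2 n (proj n f (Dir.dx α β)) η ζ
        = ∑ c ∈ Zf2 (2 * n - 1),
            ft3 n f (-α * (c.1 : ℝ) - β * (c.2 : ℝ)) (c.1 : ℝ) (c.2 : ℝ) *
              Dk (2 * n - 1) (η - (c.1 : ℝ)) * Dk (2 * n - 1) (ζ - (c.2 : ℝ))) ∧
    (∀ ξ η : ℝ, ft2 n (proj n f (Dir.dz α β)) ξ η
        = ∑ c ∈ Zf2 (2 * n - 1),
            ft3 n f (c.1 : ℝ) (c.2 : ℝ) (-α * (c.1 : ℝ) - β * (c.2 : ℝ)) *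
              Dk (2 * n - 1) (ξ - (c.1 : ℝ)) * Dk (2 * n - 1) (η - (c.2 : ℝ))) :=
  ⟨ft2_proj_dx n f α β, fun ξ η => by
    simp only [proj_dz_eq_proj_dx_rotate, ft2_proj_dx, ft3_rotate]⟩

/-- Interpolated Fourier slice identities. -/
theorem interpolated_fourier_slice
    (n : ℕ) (hn : Odd n) (hn3 : 3 ≤ n)
    (f : ℤ → ℤ → ℤ → ℂ) (hf : IsObj n f)
    (α β : ℝ) (hα : |α| < 1) (hβ : |β| < 1) :
    (∀ η ζ : ℝ, ft2 n (proj n f (Dir.dx α β)) η ζ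
        = ∑ c ∈ Zf2 (2 * n - 1),
            ft3 n f (-α * (c.1 : ℝ) - β * (c.2 : ℝ)) (c.1 : ℝ) (c.2 : ℝ) *
              Dk (2 * n - 1) (η - (c.1 : ℝ)) * Dk (2 * n - 1) (ζ - (c.2 : ℝ))) ∧
    (∀ ξ η : ℝ, ft2 n (proj n f (Dir.dz α β)) ξ η
        = ∑ c ∈ Zf2 (2 * n - 1),
            ft3 n f (c.1 : ℝ) (c.2 : ℝ) (-α * (c.1 : ℝ) - β * (c.2 : ℝ)) *
              Dk (2 * n - 1) (ξ - (c.1 : ℝ)) * Dk (2 * n - 1) (η - (c.2 : ℝ))) :=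
  interpolated_fourier_slice_general n f α β

end Tomo3D
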